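/- arXiv:2203.12404 — 10 statements merged into one kernel-verified Lean document; each statement's English description precedes it below -/
import Mathlib

section
/- Let ω be a nonzero element of the degree-2 component of the exterior algebra of ℝ⁴ (i.e. ω lies in the square of the submodule of the exterior algebra generated by the vectors). Then ω is simple (decomposable), i.e. ω = v ∧ w for some vectors v, w ∈ ℝ⁴, if and only if ω ∧ ω = 0. -/
/-!
In the basis `eᵢ ∧ eⱼ` write `ω = ∑ pᵢⱼ eᵢ ∧ eⱼ`. Then
`ω ∧ ω = 2 (p₀₁ p₂₃ - p₀₂ p₁₃ + p₀₃ p₁₂) e₀ ∧ e₁ ∧ e₂ ∧ e₃`, and `e₀ ∧ e₁ ∧ e₂ ∧ e₃ ≠ 0` because the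
determinant, extended to the exterior algebra, takes the value `1` on it. So `ω ∧ ω = 0` is the
Plücker relation, and when it holds, dividing by a nonzero coordinate `pᵢⱼ` exhibits `ω` as an
explicit product `v ∧ w`.
-/

open ExteriorAlgebra

section

variable {R M : Type*} [CommRing R] [AddCommGroup M] [Module R M]

theorem ι_mul_ι_swap (v w : M) : ι R w * ι R v = -(ι R v * ι R w) :=
  eq_neg_of_add_eq_zero_left (ι_add_mul_swap w v)

theorem ι_mul_ι_mul_self_eq_zero (v w : M) : ι R v * ι R w * (ι R v * ι R w) = 0 := by
  calc ι R v * ι R w * (ι R v * ι R w) = ι R v * (ι R w * ι R v) * ι R w := by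
        simp only [mul_assoc]
    _ = -(ι R v * ι R v * (ι R w * ι R w)) := by
        rw [ι_mul_ι_swap]; simp only [mul_neg, neg_mul, mul_assoc]
    _ = 0 := by rw [ι_sq_zero, zero_mul, neg_zero]

theorem ιMulti_ne_zero_of_det_ne_zero {n : ℕ} {v : Fin n → Fin n → R}
    (h : (Matrix.of v).det ≠ 0) : ιMulti R n v ≠ 0 := by
  intro hv
  have := congrArg (liftAlternating (R := R) (Pi.single n Matrix.detRowAlternating)) hv
  rw [liftAlternating_apply_ιMulti, Pi.single_eq_same, map_zero] at this
  exact h this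

end

namespace ExteriorAlgebraFin4

variable {R : Type*} [CommRing R]

def e (i : Fin 4) : ExteriorAlgebra R (Fin 4 → R) := ι R (Pi.single i 1)

def ofCoords (p01 p02 p03 p12 p13 p23 : R) : ExteriorAlgebra R (Fin 4 → R) :=
  p01 • (e 0 * e 1) + p02 • (e 0 * e 2) + p03 • (e 0 * e 3) + p12 • (e 1 * e 2) +
    p13 • (e 1 * e 3) + p23 • (e 2 * e 3)

theorem e_mul_self (i : Fin 4) : e i * e i = (0 : ExteriorAlgebra R _) := ι_sq_zero _

theorem e_mul_e_mul_self (i : Fin 4) (x : ExteriorAlgebra R (Fin 4 → R)) :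
    e i * (e i * x) = 0 := by
  rw [← mul_assoc, e_mul_self, zero_mul]

theorem e_mul_e_swap (i j : Fin 4) : e j * e i = -(e i * e j : ExteriorAlgebra R _) :=
  ι_mul_ι_swap _ _

theorem e_mul_e_mul_swap (i j : Fin 4) (x : ExteriorAlgebra R (Fin 4 → R)) :
    e j * (e i * x) = -(e i * (e j * x)) := by
  rw [← mul_assoc, e_mul_e_swap, neg_mul, mul_assoc]

theorem ι_eq (v : Fin 4 → R) : ι R v = v 0 • e 0 + v 1 • e 1 + v 2 • e 2 + v 3 • e 3 := by
  conv_lhs => rw [pi_eq_sum_univ' v]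
  simp only [Fin.sum_univ_four, map_add, map_smul, e]

theorem ι_mul_ι (v w : Fin 4 → R) :
    ι R v * ι R w = ofCoords (v 0 * w 1 - v 1 * w 0) (v 0 * w 2 - v 2 * w 0)
      (v 0 * w 3 - v 3 * w 0) (v 1 * w 2 - v 2 * w 1) (v 1 * w 3 - v 3 * w 1)
      (v 2 * w 3 - v 3 * w 2) := by
  rw [ι_eq v, ι_eq w, ofCoords]
  simp only [add_mul, mul_add, smul_mul_smul_comm, e_mul_self, e_mul_e_swap 0 1, e_mul_e_swap 0 2,
    e_mul_e_swap 0 3, e_mul_e_swap 1 2, e_mul_e_swap 1 3, e_mul_e_swap 2 3, smul_neg, smul_zero]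
  match_scalars <;> ring

theorem ofCoords_mul_self (p01 p02 p03 p12 p13 p23 : R) :
    ofCoords p01 p02 p03 p12 p13 p23 * ofCoords p01 p02 p03 p12 p13 p23 =
      (2 * (p01 * p23 - p02 * p13 + p03 * p12)) • (e 0 * (e 1 * (e 2 * e 3))) := by
  simp only [ofCoords, add_mul, mul_add, smul_mul_smul_comm, mul_assoc, e_mul_e_mul_self,
    e_mul_self, e_mul_e_mul_swap 0 1, e_mul_e_mul_swap 0 2, e_mul_e_mul_swap 0 3,
    e_mul_e_mul_swap 1 2, e_mul_e_mul_swap 1 3, e_mul_e_mul_swap 2 3, e_mul_e_swap 1 2,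
    e_mul_e_swap 1 3, e_mul_e_swap 2 3, mul_neg, neg_neg, mul_zero, smul_neg, smul_zero]
  match_scalars; ring

theorem e_mul_e_mul_e_mul_e_ne_zero [Nontrivial R] :
    e 0 * (e 1 * (e 2 * e 3)) ≠ (0 : ExteriorAlgebra R _) := by
  have hprod : e 0 * (e 1 * (e 2 * e 3)) = ιMulti R 4 (fun i => Pi.single i 1) := by
    simp [ιMulti_apply, e, Matrix.vecTail]
  have hdet : Matrix.of (fun i : Fin 4 => (Pi.single i 1 : Fin 4 → R)) = 1 := by
    ext i j; simp [Matrix.one_eq_pi_single]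
  rw [hprod]
  exact ιMulti_ne_zero_of_det_ne_zero (by rw [hdet, Matrix.det_one]; exact one_ne_zero)

theorem exists_eq_ofCoords {ω : ExteriorAlgebra R (Fin 4 → R)}
    (hω : ω ∈ LinearMap.range (ι R (M := Fin 4 → R)) ^ 2) :
    ∃ p01 p02 p03 p12 p13 p23 : R, ω = ofCoords p01 p02 p03 p12 p13 p23 := by
  rw [pow_two] at hω
  refine Submodule.mul_induction_on hω ?_ ?_
  · rintro _ ⟨v, rfl⟩ _ ⟨w, rfl⟩
    exact ⟨_, _, _, _, _, _, ι_mul_ι v w⟩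
  · rintro _ _ ⟨a, b, c, d, e, f, rfl⟩ ⟨a', b', c', d', e', f', rfl⟩
    exact ⟨a + a', b + b', c + c', d + d', e + e', f + f', by simp only [ofCoords]; module⟩

variable {K : Type*} [Field K]

theorem exists_ofCoords_zero_eq_ι_mul_ι (p12 p13 p23 : K) :
    ∃ v w : Fin 4 → K, ofCoords 0 0 0 p12 p13 p23 = ι K v * ι K w := by
  rcases eq_or_ne p12 0 with rfl | h12
  · exact ⟨![0, p13, p23, 0], ![0, 0, 0, 1], by rw [ι_mul_ι]; congr 1 <;> simp⟩
  · refine ⟨![0, 1, 0, -p23 / p12], ![0, 0, p12, p13], ?_⟩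
    rw [ι_mul_ι]
    congr 1 <;> simp [h12]

theorem exists_ofCoords_eq_ι_mul_ι {p01 p02 p03 p12 p13 p23 : K}
    (h : p01 * p23 - p02 * p13 + p03 * p12 = 0) :
    ∃ v w : Fin 4 → K, ofCoords p01 p02 p03 p12 p13 p23 = ι K v * ι K w := by
  rcases ne_or_eq p01 0 with h01 | rfl
  · refine ⟨![1, 0, -p12 / p01, -p13 / p01], ![0, p01, p02, p03], ?_⟩
    rw [ι_mul_ι]
    congr 1 <;> simp <;> field_simp
    linear_combination h
  rcases ne_or_eq p02 0 with h02 | rfl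
  · refine ⟨![1, p12 / p02, 0, -p23 / p02], ![0, 0, p02, p03], ?_⟩
    rw [ι_mul_ι]
    congr 1 <;> simp <;> field_simp
    linear_combination -h
  rcases ne_or_eq p03 0 with h03 | rfl
  · have h12 : p12 = 0 := by simpa [h03] using h
    subst h12
    refine ⟨![1, p13 / p03, p23 / p03, 0], ![0, 0, 0, p03], ?_⟩
    rw [ι_mul_ι]
    congr 1 <;> simp <;> field_simp
  exact exists_ofCoords_zero_eq_ι_mul_ι p12 p13 p23

end ExteriorAlgebraFin4

open ExteriorAlgebraFin4 in
theorem simple_iff_wedge_self_eq_zero_general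
    (ω : ExteriorAlgebra ℝ (Fin 4 → ℝ))
    (hω : ω ∈ (LinearMap.range (ExteriorAlgebra.ι ℝ (M := Fin 4 → ℝ)) ^ 2 :
      Submodule ℝ (ExteriorAlgebra ℝ (Fin 4 → ℝ)))) :
    (∃ v w : Fin 4 → ℝ,
        ω = ExteriorAlgebra.ι ℝ v * ExteriorAlgebra.ι ℝ w) ↔ ω * ω = 0 := by
  refine ⟨fun ⟨v, w, hvw⟩ => hvw ▸ ι_mul_ι_mul_self_eq_zero v w, fun h => ?_⟩
  obtain ⟨p01, p02, p03, p12, p13, p23, rfl⟩ := exists_eq_ofCoords hω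
  rw [ofCoords_mul_self, smul_eq_zero, mul_eq_zero] at h
  rcases h with (h2 | hpl) | hvol
  · exact absurd h2 two_ne_zero
  · exact exists_ofCoords_eq_ι_mul_ι hpl
  · exact absurd hvol e_mul_e_mul_e_mul_e_ne_zero

/-- A nonzero 2-vector `ω` on `ℝ⁴` (an element of the degree-2 component of the
exterior algebra, i.e. of the square of the submodule generated by the vectors)
is simple (decomposable), i.e. `ω = v ∧ w` for some vectors `v, w : ℝ⁴`,
if and only if `ω ∧ ω = 0`. -/
theorem simple_iff_wedge_self_eq_zero
    (ω : ExteriorAlgebra ℝ (Fin 4 → ℝ))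
    (hω : ω ∈ (LinearMap.range (ExteriorAlgebra.ι ℝ (M := Fin 4 → ℝ)) ^ 2 :
      Submodule ℝ (ExteriorAlgebra ℝ (Fin 4 → ℝ))))
    (hne : ω ≠ 0) :
    (∃ v w : Fin 4 → ℝ,
        ω = ExteriorAlgebra.ι ℝ v * ExteriorAlgebra.ι ℝ w) ↔ ω * ω = 0 :=
  simple_iff_wedge_self_eq_zero_general ω hω
end

section
/- Let a, b, c, d : ℝ → ℝ be differentiable functions satisfying the Riccati system (R) on all of ℝ. Then 1 + a(t)·d(t) − b(t)·c(t) > 0 for every t ∈ ℝ. -/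
/-!
`F = 1 + ad - bc` solves the linear equation `F' = (a + d) F`, so it never changes sign. If
`F ≤ 0` everywhere, then `bc ≥ 1 + ad` turns `u = (a + d) / 2` into a solution of
`u' ≥ 1 + u²`; then `arctan ∘ u` grows with speed at least `1`, and cannot stay inside
`(-π/2, π/2)` over an interval of length `π`.
-/

open Real

theorem eq_mul_exp_integral_of_hasDerivAt_mul_self {f k : ℝ → ℝ} (hk : Continuous k)
    (hf : ∀ t, HasDerivAt f (k t * f t) t) (t : ℝ) :
    f t = f 0 * exp (∫ x in (0 : ℝ)..t, k x) := by
  set K : ℝ → ℝ := fun t => ∫ x in (0 : ℝ)..t, k x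
  have hG : ∀ t, HasDerivAt (fun t => f t * exp (-K t)) 0 t := fun t =>
    ((hf t).mul (hk.integral_hasStrictDerivAt 0 t).hasDerivAt.neg.exp).congr_deriv (by ring)
  have hconst := is_const_of_deriv_eq_zero (fun t => (hG t).differentiableAt)
    (fun t => (hG t).deriv) t 0
  simp only [K, intervalIntegral.integral_same, neg_zero, exp_zero, mul_one] at hconst
  rw [← hconst, mul_assoc, ← exp_add, neg_add_cancel, exp_zero, mul_one]

theorem nonpos_of_hasDerivAt_mul_self {f k : ℝ → ℝ} (hk : Continuous k)
    (hf : ∀ t, HasDerivAt f (k t * f t) t) {t₀ : ℝ} (h₀ : f t₀ ≤ 0) (t : ℝ) : f t ≤ 0 := by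
  rw [eq_mul_exp_integral_of_hasDerivAt_mul_self hk hf] at h₀ ⊢
  exact mul_nonpos_of_nonpos_of_nonneg (nonpos_of_mul_nonpos_left h₀ (exp_pos _)) (exp_pos _).le

theorem false_of_forall_one_add_sq_le_deriv {u u' : ℝ → ℝ} (hu : ∀ t, HasDerivAt u (u' t) t)
    (hle : ∀ t, 1 + u t ^ 2 ≤ u' t) : False := by
  have harctan : ∀ t, HasDerivAt (fun t => arctan (u t)) (1 / (1 + u t ^ 2) * u' t) t :=
    fun t => (hasDerivAt_arctan (u t)).comp t (hu t)
  have hrate : ∀ t, 1 ≤ deriv (fun t => arctan (u t)) t := fun t => by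
    rw [(harctan t).deriv, one_div, inv_mul_eq_div, one_le_div (by positivity)]
    exact hle t
  have hgrowth := mul_sub_le_image_sub_of_le_deriv (fun t => (harctan t).differentiableAt)
    hrate pi_pos.le
  linarith [arctan_lt_pi_div_two (u π), neg_pi_div_two_lt_arctan (u 0)]

theorem hasDerivAt_one_add_mul_sub_mul {a b c d : ℝ → ℝ}
    (hA : ∀ t, HasDerivAt a (1 + a t ^ 2 + b t * c t) t)
    (hD : ∀ t, HasDerivAt d (1 + d t ^ 2 + b t * c t) t)
    (hB : ∀ t, HasDerivAt b (b t * (a t + d t)) t)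
    (hC : ∀ t, HasDerivAt c (c t * (a t + d t)) t) (t : ℝ) :
    HasDerivAt (fun t => 1 + a t * d t - b t * c t)
      ((a t + d t) * (1 + a t * d t - b t * c t)) t :=
  (((hA t).mul (hD t)).const_add 1 |>.sub ((hB t).mul (hC t))).congr_deriv (by ring)

/-- For differentiable functions `a, b, c, d : ℝ → ℝ` satisfying the Riccati system
`a' = 1 + a² + bc`, `d' = 1 + d² + bc`, `b' = b(a+d)`, `c' = c(a+d)` on all of `ℝ`,
one has `1 + a·d − b·c > 0` everywhere. -/
theorem riccati_one_add_det_pos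
    (a b c d : ℝ → ℝ)
    (ha : Differentiable ℝ a) (hb : Differentiable ℝ b)
    (hc : Differentiable ℝ c) (hd : Differentiable ℝ d)
    (hA : ∀ t, deriv a t = 1 + (a t) ^ 2 + b t * c t)
    (hD : ∀ t, deriv d t = 1 + (d t) ^ 2 + b t * c t)
    (hB : ∀ t, deriv b t = b t * (a t + d t))
    (hC : ∀ t, deriv c t = c t * (a t + d t)) :
    ∀ t : ℝ, 0 < 1 + a t * d t - b t * c t := by
  have hA' : ∀ t, HasDerivAt a (1 + a t ^ 2 + b t * c t) t := fun t => hA t ▸ (ha t).hasDerivAt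
  have hD' : ∀ t, HasDerivAt d (1 + d t ^ 2 + b t * c t) t := fun t => hD t ▸ (hd t).hasDerivAt
  have hB' : ∀ t, HasDerivAt b (b t * (a t + d t)) t := fun t => hB t ▸ (hb t).hasDerivAt
  have hC' : ∀ t, HasDerivAt c (c t * (a t + d t)) t := fun t => hC t ▸ (hc t).hasDerivAt
  intro t₀
  by_contra! h₀
  have hnonpos : ∀ t, 1 + a t * d t - b t * c t ≤ 0 :=
    nonpos_of_hasDerivAt_mul_self (ha.add hd).continuous
      (hasDerivAt_one_add_mul_sub_mul hA' hD' hB' hC') h₀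
  refine false_of_forall_one_add_sq_le_deriv (fun t => ((hA' t).add (hD' t)).div_const 2)
    fun t => ?_
  rw [Pi.add_apply]
  nlinarith [hnonpos t, sq_nonneg (a t + d t)]
end

section
/- Let a, b, c, d : ℝ → ℝ be differentiable functions satisfying the Riccati system (R) on all of ℝ. Then (a(t) + d(t))² − 4(a(t)·d(t) − b(t)·c(t)) < 0 for every t ∈ ℝ. -/
/-!
The discriminant `Δ = (a + d)² − 4(ad − bc)` of the matrix `(a b; c d)` obeys the linear equation
`Δ' = 2(a + d)Δ`, so it never changes sign. If `Δ ≥ 0` somewhere, then `Δ ≥ 0` everywhere, and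
`u = (a + d)/2` satisfies `u' = 1 + u² + Δ/4 ≥ 1 + u²`; comparing with `tan`, such a `u` blows up
within time `π`, which contradicts its being defined on all of `ℝ`.
-/

open Real Set

theorem eq_mul_exp_integral_of_hasDerivAt {f g : ℝ → ℝ} (hg : Continuous g)
    (hf : ∀ t, HasDerivAt f (g t * f t) t) (t₀ t : ℝ) :
    f t = f t₀ * exp (∫ s in t₀..t, g s) := by
  set G : ℝ → ℝ := fun t => ∫ s in t₀..t, g s
  have hG : ∀ t, HasDerivAt G (g t) t := fun t => (hg.integral_hasStrictDerivAt t₀ t).hasDerivAt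
  have hconst : ∀ t, HasDerivAt (fun t => f t * exp (-G t)) 0 t := fun t => by
    refine ((hf t).mul (hG t).neg.exp).congr_deriv ?_
    ring
  have key := is_const_of_deriv_eq_zero (fun t => (hconst t).differentiableAt)
    (fun t => (hconst t).deriv) t t₀
  simp only [G, intervalIntegral.integral_same, neg_zero, exp_zero, mul_one] at key
  rw [← key, mul_assoc, ← exp_add, neg_add_cancel, exp_zero, mul_one]

theorem sub_lt_pi_of_one_add_sq_le_deriv {u u' : ℝ → ℝ} {x y : ℝ}
    (hu : ∀ t ∈ Icc x y, HasDerivAt u (u' t) t) (hle : ∀ t ∈ Icc x y, 1 + u t ^ 2 ≤ u' t) :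
    y - x < π := by
  rcases lt_or_ge y x with hyx | hxy
  · linarith [pi_pos]
  have hk : ∀ t ∈ Icc x y, HasDerivAt (fun t => arctan (u t) - t) (u' t / (1 + u t ^ 2) - 1) t :=
    fun t ht => by
      refine (((hasDerivAt_arctan (u t)).comp t (hu t ht)).sub (hasDerivAt_id t)).congr_deriv ?_
      ring
  have hmono : MonotoneOn (fun t => arctan (u t) - t) (Icc x y) := by
    refine monotoneOn_of_hasDerivWithinAt_nonneg (convex_Icc x y)
      (fun t ht => (hk t ht).continuousAt.continuousWithinAt)
      (fun t ht => (hk t (interior_subset ht)).hasDerivWithinAt) (fun t ht => ?_)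
    rw [sub_nonneg, one_le_div (by positivity)]
    exact hle t (interior_subset ht)
  have hxy' := hmono (left_mem_Icc.2 hxy) (right_mem_Icc.2 hxy) hxy
  linarith [arctan_lt_pi_div_two (u y), neg_pi_div_two_lt_arctan (u x)]

structure IsRiccatiSolution (a b c d : ℝ → ℝ) : Prop where
  hasDerivAt_a : ∀ t, HasDerivAt a (1 + a t ^ 2 + b t * c t) t
  hasDerivAt_d : ∀ t, HasDerivAt d (1 + d t ^ 2 + b t * c t) t
  hasDerivAt_b : ∀ t, HasDerivAt b (b t * (a t + d t)) t
  hasDerivAt_c : ∀ t, HasDerivAt c (c t * (a t + d t)) t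

def riccatiDiscriminant (a b c d : ℝ → ℝ) (t : ℝ) : ℝ :=
  (a t + d t) ^ 2 - 4 * (a t * d t - b t * c t)

namespace IsRiccatiSolution

variable {a b c d : ℝ → ℝ}

theorem hasDerivAt_half_trace (h : IsRiccatiSolution a b c d) (t : ℝ) :
    HasDerivAt (fun t => (a t + d t) / 2)
      (1 + ((a t + d t) / 2) ^ 2 + riccatiDiscriminant a b c d t / 4) t := by
  refine (((h.hasDerivAt_a t).add (h.hasDerivAt_d t)).div_const 2).congr_deriv ?_
  unfold riccatiDiscriminant
  ring

theorem hasDerivAt_discriminant (h : IsRiccatiSolution a b c d) (t : ℝ) :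
    HasDerivAt (riccatiDiscriminant a b c d)
      (2 * (a t + d t) * riccatiDiscriminant a b c d t) t := by
  have ha := h.hasDerivAt_a t
  have hd := h.hasDerivAt_d t
  refine (((ha.add hd).pow 2).sub (((ha.mul hd).sub ((h.hasDerivAt_b t).mul
    (h.hasDerivAt_c t))).const_mul 4)).congr_deriv ?_
  unfold riccatiDiscriminant
  simp only [Pi.add_apply, Nat.cast_ofNat]
  ring

theorem discriminant_nonneg (h : IsRiccatiSolution a b c d) {t₀ : ℝ}
    (h₀ : 0 ≤ riccatiDiscriminant a b c d t₀) (t : ℝ) : 0 ≤ riccatiDiscriminant a b c d t := by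
  have hcont : Continuous fun t => 2 * (a t + d t) :=
    continuous_const.mul (continuous_iff_continuousAt.2 fun t =>
      ((h.hasDerivAt_a t).add (h.hasDerivAt_d t)).continuousAt)
  rw [eq_mul_exp_integral_of_hasDerivAt hcont h.hasDerivAt_discriminant t₀ t]
  positivity

theorem discriminant_neg (h : IsRiccatiSolution a b c d) (t : ℝ) :
    riccatiDiscriminant a b c d t < 0 := by
  by_contra! h₀
  have hlt := sub_lt_pi_of_one_add_sq_le_deriv (x := t) (y := t + 4)
    (fun s _ => h.hasDerivAt_half_trace s)
    (fun s _ => le_add_of_nonneg_right (div_nonneg (h.discriminant_nonneg h₀ s) zero_le_four))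
  linarith [pi_lt_d2]

end IsRiccatiSolution

/-- For differentiable functions `a, b, c, d : ℝ → ℝ` satisfying the Riccati system
`a' = 1 + a² + bc`, `d' = 1 + d² + bc`, `b' = b(a+d)`, `c' = c(a+d)` on all of `ℝ`,
the discriminant `(a+d)² − 4(a·d − b·c)` is everywhere negative. -/
theorem riccati_discriminant_neg
    (a b c d : ℝ → ℝ)
    (ha : Differentiable ℝ a) (hb : Differentiable ℝ b)
    (hc : Differentiable ℝ c) (hd : Differentiable ℝ d)
    (hA : ∀ t, deriv a t = 1 + (a t) ^ 2 + b t * c t)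
    (hD : ∀ t, deriv d t = 1 + (d t) ^ 2 + b t * c t)
    (hB : ∀ t, deriv b t = b t * (a t + d t))
    (hC : ∀ t, deriv c t = c t * (a t + d t)) :
    ∀ t : ℝ, (a t + d t) ^ 2 - 4 * (a t * d t - b t * c t) < 0 :=
  IsRiccatiSolution.discriminant_neg
    { hasDerivAt_a := fun t => hA t ▸ (ha t).hasDerivAt
      hasDerivAt_d := fun t => hD t ▸ (hd t).hasDerivAt
      hasDerivAt_b := fun t => hB t ▸ (hb t).hasDerivAt
      hasDerivAt_c := fun t => hC t ▸ (hc t).hasDerivAt }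
end

section
/- Let a, b, c, d : ℝ → ℝ be differentiable functions satisfying the Riccati system (R) on all of ℝ. Then b(t) − c(t) ≠ 0 for every t ∈ ℝ; in fact b − c has constant sign on ℝ (it is everywhere positive or everywhere negative). -/
/-!
Along a solution, `b - c` solves the scalar linear equation `y' = (a + d) y`, so it equals
`(b 0 - c 0) · exp (∫₀ᵗ (a + d))` and has the sign of `b 0 - c 0` everywhere. If `b 0 = c 0`, then
`b = c` and `a' = 1 + a² + b² ≥ 1 + a²`; thus `arctan a` grows at least as fast as `t`, impossible for
a function with values in `(-π/2, π/2)` on an interval of length `π`.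
-/

open Real

theorem eq_mul_exp_integral_of_hasDerivAt_mul {y g : ℝ → ℝ} (hg : Continuous g)
    (hy : ∀ t, HasDerivAt y (y t * g t) t) (t₀ t : ℝ) :
    y t = y t₀ * exp (∫ s in t₀..t, g s) := by
  set G : ℝ → ℝ := fun t => ∫ s in t₀..t, g s
  have hG : ∀ t, HasDerivAt G (g t) t := fun t => (hg.integral_hasStrictDerivAt t₀ t).hasDerivAt
  have hF : ∀ t, HasDerivAt (fun t => y t * exp (-G t)) 0 t := fun t => by
    refine ((hy t).mul (hG t).neg.exp).congr_deriv ?_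
    ring
  have hF_const : y t * exp (-G t) = y t₀ * exp (-G t₀) :=
    is_const_of_deriv_eq_zero (fun t => (hF t).differentiableAt) (fun t => (hF t).deriv) t t₀
  have hG₀ : G t₀ = 0 := intervalIntegral.integral_same
  rw [hG₀, neg_zero, exp_zero, mul_one] at hF_const
  rw [← hF_const, mul_assoc, ← exp_add, neg_add_cancel, exp_zero, mul_one]

theorem not_forall_one_add_sq_le_deriv {a : ℝ → ℝ} (ha : Differentiable ℝ a) :
    ¬ ∀ t, 1 + a t ^ 2 ≤ deriv a t := by
  intro h
  have hk : ∀ t, HasDerivAt (fun t => arctan (a t) - t) (deriv a t / (1 + a t ^ 2) - 1) t :=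
    fun t => by
      refine (((hasDerivAt_arctan (a t)).comp t (ha t).hasDerivAt).sub
        (hasDerivAt_id t)).congr_deriv ?_
      ring
  have hmono : Monotone fun t => arctan (a t) - t := by
    refine monotone_of_deriv_nonneg (fun t => (hk t).differentiableAt) fun t => ?_
    rw [(hk t).deriv, sub_nonneg, one_le_div (by positivity)]
    exact h t
  have h0π : arctan (a 0) - 0 ≤ arctan (a π) - π := hmono pi_pos.le
  linarith [arctan_lt_pi_div_two (a π), neg_pi_div_two_lt_arctan (a 0)]

theorem riccati_b_sub_c_ne_zero_and_constant_sign_general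
    (a b c d : ℝ → ℝ)
    (ha : Differentiable ℝ a) (hb : Differentiable ℝ b)
    (hc : Differentiable ℝ c) (hd : Differentiable ℝ d)
    (hA : ∀ t, deriv a t = 1 + (a t) ^ 2 + b t * c t)
    (hB : ∀ t, deriv b t = b t * (a t + d t))
    (hC : ∀ t, deriv c t = c t * (a t + d t)) :
    (∀ t : ℝ, b t - c t ≠ 0) ∧
      ((∀ t : ℝ, 0 < b t - c t) ∨ (∀ t : ℝ, b t - c t < 0)) := by
  have hy : ∀ t, HasDerivAt (fun t => b t - c t) ((b t - c t) * (a t + d t)) t := fun t => by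
    refine ((hb t).hasDerivAt.sub (hc t).hasDerivAt).congr_deriv ?_
    rw [hB, hC]
    ring
  have hsol := eq_mul_exp_integral_of_hasDerivAt_mul (ha.continuous.add hd.continuous) hy 0
  have h₀ : b 0 - c 0 ≠ 0 := by
    intro h₀
    refine not_forall_one_add_sq_le_deriv ha fun t => ?_
    have hbc : b t = c t := by simpa [h₀, sub_eq_zero] using hsol t
    rw [hA, hbc]
    nlinarith [sq_nonneg (c t)]
  refine ⟨fun t => by rw [hsol t]; exact mul_ne_zero h₀ (exp_ne_zero _), ?_⟩
  rcases h₀.lt_or_gt with hneg | hpos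
  · exact Or.inr fun t => by rw [hsol t]; exact mul_neg_of_neg_of_pos hneg (exp_pos _)
  · exact Or.inl fun t => by rw [hsol t]; exact mul_pos hpos (exp_pos _)

/-- For differentiable functions `a, b, c, d : ℝ → ℝ` satisfying the Riccati system
`a' = 1 + a² + bc`, `d' = 1 + d² + bc`, `b' = b(a+d)`, `c' = c(a+d)` on all of `ℝ`,
the function `b − c` never vanishes; in fact it has constant sign on `ℝ`. -/
theorem riccati_b_sub_c_ne_zero_and_constant_sign
    (a b c d : ℝ → ℝ)
    (ha : Differentiable ℝ a) (hb : Differentiable ℝ b)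
    (hc : Differentiable ℝ c) (hd : Differentiable ℝ d)
    (hA : ∀ t, deriv a t = 1 + (a t) ^ 2 + b t * c t)
    (hD : ∀ t, deriv d t = 1 + (d t) ^ 2 + b t * c t)
    (hB : ∀ t, deriv b t = b t * (a t + d t))
    (hC : ∀ t, deriv c t = c t * (a t + d t)) :
    (∀ t : ℝ, b t - c t ≠ 0) ∧
      ((∀ t : ℝ, 0 < b t - c t) ∨ (∀ t : ℝ, b t - c t < 0)) :=
  riccati_b_sub_c_ne_zero_and_constant_sign_general a b c d ha hb hc hd hA hB hC
end

section
/- Let a, b, c, d : ℝ → ℝ be differentiable functions satisfying the Riccati system (R) on all of ℝ, and assume that a(t) + d(t) = 0 for every t ∈ ℝ. Then a(t)·d(t) − b(t)·c(t) = 1 for every t ∈ ℝ, and the 2×2 matrix φ(t) with rows (a(t), b(t)), (c(t), d(t)) satisfies φ(t)·φ(t) = −I for every t ∈ ℝ. -/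
/-- For differentiable functions `a, b, c, d : ℝ → ℝ` satisfying the Riccati system
`a' = 1 + a² + bc`, `d' = 1 + d² + bc`, `b' = b(a+d)`, `c' = c(a+d)` on all of `ℝ`,
with `a + d = 0` everywhere (divergence free case), one has `a·d − b·c = 1`
everywhere, and the matrix `φ = !![a, b; c, d]` satisfies `φ² = −I` everywhere. -/
theorem riccati_trace_free_is_complex_structure
    (a b c d : ℝ → ℝ)
    (ha : Differentiable ℝ a) (hb : Differentiable ℝ b)
    (hc : Differentiable ℝ c) (hd : Differentiable ℝ d)
    (hA : ∀ t, deriv a t = 1 + (a t) ^ 2 + b t * c t)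
    (hD : ∀ t, deriv d t = 1 + (d t) ^ 2 + b t * c t)
    (hB : ∀ t, deriv b t = b t * (a t + d t))
    (hC : ∀ t, deriv c t = c t * (a t + d t))
    (htr : ∀ t, a t + d t = 0) :
    ∀ t : ℝ, a t * d t - b t * c t = 1 ∧
      !![a t, b t; c t, d t] * !![a t, b t; c t, d t]
        = -(1 : Matrix (Fin 2) (Fin 2) ℝ) := by
  have hsum : ∀ t, deriv a t + deriv d t = 0 := by
    intro t
    have h1 : deriv (fun t => a t + d t) t = deriv a t + deriv d t :=
      deriv_add (ha t) (hd t)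
    have h2 : (fun t => a t + d t) = fun _ => (0 : ℝ) := funext htr
    rw [h2, deriv_const] at h1
    linarith
  intro t
  have hd' : d t = -a t := by have := htr t; linarith
  have hkey : a t * d t - b t * c t = 1 := by
    have h := hsum t
    rw [hA t, hD t, hd'] at h
    linear_combination -h/2 + a t * htr t
  refine ⟨hkey, ?_⟩
  have hbd : b t * (a t + d t) = 0 := by rw [htr t]; ring
  have hcd : c t * (a t + d t) = 0 := by rw [htr t]; ring
  ext i j
  fin_cases i <;> fin_cases j <;>
    simp [Matrix.mul_apply, Fin.sum_univ_succ, Matrix.one_apply]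
  · linear_combination -hkey + a t * htr t
  · linear_combination b t * htr t
  · linear_combination c t * htr t
  · linear_combination -hkey + d t * htr t
end

section
/- Let φ₂₂, φ₂₃, φ₃₂, φ₃₃ be real numbers, and let M₋ and M₊ be the associated 2×2 matrices. Then ‖M₊·w‖ < ‖M₋·w‖ for every nonzero w ∈ ℝ² if and only if φ₂₃ − φ₃₂ < 0 and (φ₂₂ + φ₃₃)² − 4(φ₂₂φ₃₃ − φ₂₃φ₃₂) < 0. -/
/-- For real numbers `φ₂₂, φ₂₃, φ₃₂, φ₃₃` with associated matrices
`M₋ = !![1−φ₂₃, −φ₃₃; −φ₂₂, −1−φ₃₂]` and `M₊ = !![−1−φ₂₃, −φ₃₃; −φ₂₂, 1−φ₃₂]`: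
`‖M₊·w‖ < ‖M₋·w‖` for every nonzero `w ∈ ℝ²` (Euclidean norm) if and only if
`φ₂₃ − φ₃₂ < 0` and `(φ₂₂+φ₃₃)² − 4(φ₂₂φ₃₃ − φ₂₃φ₃₂) < 0`. -/
theorem length_decreasing_iff_trace_and_discriminant
    (φ₂₂ φ₂₃ φ₃₂ φ₃₃ : ℝ) :
    (∀ w : Fin 2 → ℝ, w ≠ 0 →
        ‖(WithLp.equiv 2 (Fin 2 → ℝ)).symm
            ((!![-1 - φ₂₃, -φ₃₃; -φ₂₂, 1 - φ₃₂]).mulVec w)‖ <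
          ‖(WithLp.equiv 2 (Fin 2 → ℝ)).symm
            ((!![1 - φ₂₃, -φ₃₃; -φ₂₂, -1 - φ₃₂]).mulVec w)‖) ↔
      (φ₂₃ - φ₃₂ < 0 ∧
        (φ₂₂ + φ₃₃) ^ 2 - 4 * (φ₂₂ * φ₃₃ - φ₂₃ * φ₃₂) < 0) := by
  have hnorm : ∀ a : Fin 2 → ℝ, ‖(WithLp.equiv 2 (Fin 2 → ℝ)).symm a‖ =
      Real.sqrt ((a 0)^2 + (a 1)^2) := by
    intro a
    rw [EuclideanSpace.norm_eq]
    simp [Fin.sum_univ_two, sq_abs]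
  have hmv : ∀ (M : Matrix (Fin 2) (Fin 2) ℝ) (w : Fin 2 → ℝ),
      (M.mulVec w) 0 = M 0 0 * w 0 + M 0 1 * w 1 ∧
      (M.mulVec w) 1 = M 1 0 * w 0 + M 1 1 * w 1 := by
    intro M w
    constructor <;> simp [Matrix.mulVec, dotProduct, Fin.sum_univ_two]
  -- reduce to quadratic form statement
  have key : ∀ w : Fin 2 → ℝ,
      (‖(WithLp.equiv 2 (Fin 2 → ℝ)).symm
            ((!![-1 - φ₂₃, -φ₃₃; -φ₂₂, 1 - φ₃₂]).mulVec w)‖ <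
          ‖(WithLp.equiv 2 (Fin 2 → ℝ)).symm
            ((!![1 - φ₂₃, -φ₃₃; -φ₂₂, -1 - φ₃₂]).mulVec w)‖) ↔
      0 < -φ₂₃ * (w 0)^2 + (φ₂₂ - φ₃₃) * (w 0 * w 1) + φ₃₂ * (w 1)^2 := by
    intro w
    rw [hnorm, hnorm]
    obtain ⟨h0, h1⟩ := hmv !![-1 - φ₂₃, -φ₃₃; -φ₂₂, 1 - φ₃₂] w
    obtain ⟨h0', h1'⟩ := hmv !![1 - φ₂₃, -φ₃₃; -φ₂₂, -1 - φ₃₂] w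
    rw [h0, h1, h0', h1']
    rw [Real.sqrt_lt_sqrt_iff (by positivity)]
    simp only [Matrix.cons_val', Matrix.cons_val_zero, Matrix.cons_val_one, Matrix.head_cons,
      Matrix.empty_val', Matrix.cons_val_fin_one, Matrix.head_fin_const, Matrix.of_apply]
    constructor <;> intro h <;> nlinarith [h]
  have hne : ∀ w : Fin 2 → ℝ, w ≠ 0 ↔ (w 0 ≠ 0 ∨ w 1 ≠ 0) := by
    intro w
    rw [Function.ne_iff]
    constructor
    · rintro ⟨i, hi⟩; fin_cases i
      · exact Or.inl hi
      · exact Or.inr hi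
    · rintro (h | h)
      · exact ⟨0, h⟩
      · exact ⟨1, h⟩
  constructor
  · intro H
    have h1 := (key ![1, 0]).mp (H ![1, 0] (by rw [hne]; left; norm_num))
    simp at h1
    -- h1 : 0 < -φ₂₃  (roughly)
    have hb : φ₂₃ < 0 := by nlinarith [h1]
    have h2 := (key ![-(φ₂₂ - φ₃₃), 2 * (-φ₂₃)]).mp
      (H ![-(φ₂₂ - φ₃₃), 2 * (-φ₂₃)] (by rw [hne]; right; simp; nlinarith))
    simp at h2
    constructor
    · nlinarith [h2]
    · nlinarith [h2]
  · rintro ⟨htr, hdisc⟩ w hw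
    rw [key]
    have hb : φ₂₃ < 0 := by nlinarith [sq_nonneg (φ₂₂ - φ₃₃), sq_nonneg (φ₂₃ + φ₃₂)]
    have hc : 0 < φ₃₂ := by nlinarith [sq_nonneg (φ₂₂ - φ₃₃)]
    rcases (hne w).mp hw with h | h
    · rcases eq_or_ne (w 1) 0 with h1 | h1
      · rw [h1]; nlinarith [sq_pos_of_ne_zero h]
      · nlinarith [sq_nonneg (2 * φ₂₃ * w 0 - (φ₂₂ - φ₃₃) * w 1),
          sq_pos_of_ne_zero h1, sq_nonneg (w 0)]
    · nlinarith [sq_nonneg (2 * φ₂₃ * w 0 - (φ₂₂ - φ₃₃) * w 1),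
        sq_pos_of_ne_zero h, sq_nonneg (w 0)]
end

section
/- Let φ₂₂, φ₂₃, φ₃₂, φ₃₃ be real numbers with D := 1 + (φ₂₂φ₃₃ − φ₂₃φ₃₂) + (φ₃₂ − φ₂₃) ≠ 0, let M₋ and M₊ be the associated 2×2 matrices, and set N = M₊·M₋⁻¹, X = (1 − det φ)² + (trace φ)², Y = |φ|² − 2·det φ (note X ≥ 0 and Y ≥ 0). Then det M₋ = −D, and the identities (det N)·D² = X − Y and trace(Nᵀ·N)·D² = 2(X + Y) hold; consequently the singular values μ₁ ≤ μ₂ of N are μ₁ = |√X − √Y|/|D| and μ₂ = (√X + √Y)/|D|. -/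
open Matrix

private lemma charpoly_fin_two' (M : Matrix (Fin 2) (Fin 2) ℝ) :
    M.charpoly = Polynomial.X ^ 2 - Polynomial.C M.trace * Polynomial.X
      + Polynomial.C M.det := by
  rw [Matrix.charpoly, Matrix.det_fin_two]
  simp only [Matrix.charmatrix_apply_eq, Matrix.charmatrix_apply_ne _ _ _ (by decide : (0:Fin 2) ≠ 1),
    Matrix.charmatrix_apply_ne _ _ _ (by decide : (1:Fin 2) ≠ 0),
    Matrix.trace_fin_two, Matrix.det_fin_two, Polynomial.C_add, Polynomial.C_sub, Polynomial.C_mul]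
  ring


/-- For real numbers `φ₂₂, φ₂₃, φ₃₂, φ₃₃` with
`D = 1 + det φ + (φ₃₂ − φ₂₃) ≠ 0`, matrices
`M₋ = !![1−φ₂₃, −φ₃₃; −φ₂₂, −1−φ₃₂]`, `M₊ = !![−1−φ₂₃, −φ₃₃; −φ₂₂, 1−φ₃₂]`,
`N = M₊·M₋⁻¹`, `X = (1 − det φ)² + (tr φ)²`, `Y = |φ|² − 2·det φ`:
one has `det M₋ = −D`, `(det N)·D² = X − Y`, `tr(Nᵀ·N)·D² = 2(X + Y)`, and the
singular values `μ₁ ≤ μ₂` of `N` (square roots of the eigenvalues of `Nᵀ·N`)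
are `μ₁ = |√X − √Y|/|D|` and `μ₂ = (√X + √Y)/|D|`. -/
theorem gauss_map_singular_values
    (φ₂₂ φ₂₃ φ₃₂ φ₃₃ : ℝ)
    (hD : 1 + (φ₂₂ * φ₃₃ - φ₂₃ * φ₃₂) + (φ₃₂ - φ₂₃) ≠ 0) :
    let D : ℝ := 1 + (φ₂₂ * φ₃₃ - φ₂₃ * φ₃₂) + (φ₃₂ - φ₂₃)
    let Mm : Matrix (Fin 2) (Fin 2) ℝ := !![1 - φ₂₃, -φ₃₃; -φ₂₂, -1 - φ₃₂]
    let Mp : Matrix (Fin 2) (Fin 2) ℝ := !![-1 - φ₂₃, -φ₃₃; -φ₂₂, 1 - φ₃₂]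
    let N : Matrix (Fin 2) (Fin 2) ℝ := Mp * Mm⁻¹
    let X : ℝ := (1 - (φ₂₂ * φ₃₃ - φ₂₃ * φ₃₂)) ^ 2 + (φ₂₂ + φ₃₃) ^ 2
    let Y : ℝ := (φ₂₂ ^ 2 + φ₂₃ ^ 2 + φ₃₂ ^ 2 + φ₃₃ ^ 2)
      - 2 * (φ₂₂ * φ₃₃ - φ₂₃ * φ₃₂)
    let μ₁ : ℝ := |Real.sqrt X - Real.sqrt Y| / |D|
    let μ₂ : ℝ := (Real.sqrt X + Real.sqrt Y) / |D|
    Mm.det = -D ∧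
    N.det * D ^ 2 = X - Y ∧
    (Nᵀ * N).trace * D ^ 2 = 2 * (X + Y) ∧
    μ₁ ≤ μ₂ ∧
    (Nᵀ * N).charpoly
      = (Polynomial.X - Polynomial.C (μ₁ ^ 2)) *
        (Polynomial.X - Polynomial.C (μ₂ ^ 2)) := by

  intro D Mm Mp N X Y μ₁ μ₂
  have hDne : (D : ℝ) ≠ 0 := hD
  have hdet : Mm.det = -D := by
    show (!![1 - φ₂₃, -φ₃₃; -φ₂₂, -1 - φ₃₂] : Matrix (Fin 2) (Fin 2) ℝ).det = -D
    rw [Matrix.det_fin_two_of]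
    show _ = -(1 + (φ₂₂ * φ₃₃ - φ₂₃ * φ₃₂) + (φ₃₂ - φ₂₃)); ring
  have hN : N = (-D)⁻¹ • ((!![-1 - φ₂₃, -φ₃₃; -φ₂₂, 1 - φ₃₂] : Matrix (Fin 2) (Fin 2) ℝ)
      * !![-1 - φ₃₂, φ₃₃; φ₂₂, 1 - φ₂₃]) := by
    show Mp * Mm⁻¹ = _
    rw [Matrix.inv_def, Ring.inverse_eq_inv, hdet]
    have hadj : Mm.adjugate = !![-1 - φ₃₂, φ₃₃; φ₂₂, 1 - φ₂₃] := by
      show (!![1 - φ₂₃, -φ₃₃; -φ₂₂, -1 - φ₃₂] : Matrix (Fin 2) (Fin 2) ℝ).adjugate = _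
      rw [Matrix.adjugate_fin_two_of]
      ext i j
      fin_cases i <;> fin_cases j <;> simp
    rw [hadj, Matrix.mul_smul]
  rw [Matrix.mul_fin_two] at hN
  have hdetN : N.det * D ^ 2 = X - Y := by
    rw [hN, Matrix.det_smul, Matrix.det_fin_two_of]
    show ((-D)⁻¹) ^ (Fintype.card (Fin 2)) * _ * D ^ 2
        = (1 - (φ₂₂ * φ₃₃ - φ₂₃ * φ₃₂)) ^ 2 + (φ₂₂ + φ₃₃) ^ 2
          - ((φ₂₂ ^ 2 + φ₂₃ ^ 2 + φ₃₂ ^ 2 + φ₃₃ ^ 2) - 2 * (φ₂₂ * φ₃₃ - φ₂₃ * φ₃₂))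
    rw [Fintype.card_fin]
    field_simp
    ring
  have htr : (Nᵀ * N).trace * D ^ 2 = 2 * (X + Y) := by
    rw [hN]
    show _ = 2 * ((1 - (φ₂₂ * φ₃₃ - φ₂₃ * φ₃₂)) ^ 2 + (φ₂₂ + φ₃₃) ^ 2
      + ((φ₂₂ ^ 2 + φ₂₃ ^ 2 + φ₃₂ ^ 2 + φ₃₃ ^ 2) - 2 * (φ₂₂ * φ₃₃ - φ₂₃ * φ₃₂)))
    rw [Matrix.transpose_smul, Matrix.smul_mul, Matrix.mul_smul, smul_smul,
      Matrix.trace_smul]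
    simp only [Matrix.trace_fin_two, Matrix.mul_apply, Fin.sum_univ_two,
      Matrix.transpose_apply, Matrix.of_apply, Matrix.cons_val', Matrix.cons_val_zero,
      Matrix.cons_val_one, Matrix.head_cons, Matrix.empty_val',
      Matrix.cons_val_fin_one, Matrix.head_fin_const, smul_eq_mul]
    field_simp
    ring
  have hX : (0:ℝ) ≤ X := by positivity
  have hY : (0:ℝ) ≤ Y := by
    show (0:ℝ) ≤ (φ₂₂ ^ 2 + φ₂₃ ^ 2 + φ₃₂ ^ 2 + φ₃₃ ^ 2) - 2 * (φ₂₂ * φ₃₃ - φ₂₃ * φ₃₂)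
    nlinarith [sq_nonneg (φ₂₂ - φ₃₃), sq_nonneg (φ₂₃ + φ₃₂)]
  have hsX : Real.sqrt X ^ 2 = X := Real.sq_sqrt hX
  have hsY : Real.sqrt Y ^ 2 = Y := Real.sq_sqrt hY
  have hsX0 : 0 ≤ Real.sqrt X := Real.sqrt_nonneg X
  have hsY0 : 0 ≤ Real.sqrt Y := Real.sqrt_nonneg Y
  have hDpos : 0 < |D| := abs_pos.mpr hDne
  have hmu : μ₁ ≤ μ₂ := by
    apply div_le_div_of_nonneg_right ?_ hDpos.le
    exact abs_le.mpr ⟨by linarith, by linarith⟩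
  refine ⟨hdet, hdetN, htr, hmu, ?_⟩
  have hD2 : (D:ℝ) ^ 2 ≠ 0 := pow_ne_zero _ hDne
  have key1 : ∀ a b : ℝ, 2 * (a ^ 2 + b ^ 2) / D ^ 2
      = (|a - b| / |D|) ^ 2 + ((a + b) / |D|) ^ 2 := by
    intro a b
    rw [div_pow, div_pow, sq_abs, sq_abs]
    field_simp
    ring
  have key2 : ∀ a b : ℝ, (a ^ 2 - b ^ 2) / D ^ 2 * ((a ^ 2 - b ^ 2) / D ^ 2)
      = (|a - b| / |D|) ^ 2 * ((a + b) / |D|) ^ 2 := by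
    intro a b
    rw [div_pow, div_pow, sq_abs, sq_abs]
    field_simp
    ring
  have h1 : (Nᵀ * N).trace = μ₁ ^ 2 + μ₂ ^ 2 := by
    have e : (Nᵀ * N).trace = 2 * (X + Y) / D ^ 2 := by
      rw [eq_div_iff hD2]; exact htr
    have k := key1 (Real.sqrt X) (Real.sqrt Y)
    rw [hsX, hsY] at k
    rw [e, k]
  have h2 : (Nᵀ * N).det = μ₁ ^ 2 * μ₂ ^ 2 := by
    have hdN : N.det = (X - Y) / D ^ 2 := by
      rw [eq_div_iff hD2]; exact hdetN
    have k := key2 (Real.sqrt X) (Real.sqrt Y)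
    rw [hsX, hsY] at k
    rw [Matrix.det_mul, Matrix.det_transpose, hdN, k]
  have hpoly : ∀ a b : ℝ, (Polynomial.X ^ 2 - Polynomial.C (a + b) * Polynomial.X
      + Polynomial.C (a * b) : Polynomial ℝ)
      = (Polynomial.X - Polynomial.C a) * (Polynomial.X - Polynomial.C b) := by
    intro a b
    simp only [Polynomial.C_add, Polynomial.C_mul]
    ring
  rw [charpoly_fin_two', h1, h2, hpoly]
end

section
/- Let {p, α₁, α₂, α₃} be an orthonormal basis of ℍ with respect to the real inner product. Then α₂·p̄·α₃ = α₁ or α₂·p̄·α₃ = −α₁. -/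
open Quaternion
open scoped RealInnerProductSpace

lemma re_star_mul' (a b : Quaternion ℝ) : (a * star b).re = (b * star a).re := by
  simp only [Quaternion.re_mul, Quaternion.re_star, Quaternion.imI_star,
    Quaternion.imJ_star, Quaternion.imK_star]; ring

/-- If `{p, α₁, α₂, α₃}` is an orthonormal basis of `ℍ` with respect to the real
inner product `⟨x, y⟩ = Re(x·ȳ)`, then `α₂·p̄·α₃ = α₁` or `α₂·p̄·α₃ = −α₁`. -/
theorem orthonormal_basis_quaternion_product
    (p α₁ α₂ α₃ : Quaternion ℝ)
    (hp : ‖p‖ = 1) (h1 : ‖α₁‖ = 1) (h2 : ‖α₂‖ = 1) (h3 : ‖α₃‖ = 1)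
    (hp1 : (p * star α₁).re = 0) (hp2 : (p * star α₂).re = 0)
    (hp3 : (p * star α₃).re = 0)
    (h12 : (α₁ * star α₂).re = 0) (h13 : (α₁ * star α₃).re = 0)
    (h23 : (α₂ * star α₃).re = 0) :
    α₂ * star p * α₃ = α₁ ∨ α₂ * star p * α₃ = -α₁ := by
  set q : Quaternion ℝ := α₂ * star p * α₃ with hq
  have hnq : ‖q‖ = 1 := by
    rw [hq, norm_mul, norm_mul, Quaternion.norm_star, hp, h2, h3]; ring
  have hnp : Quaternion.normSq p = 1 := by
    rw [Quaternion.normSq_eq_norm_mul_self, hp]; norm_num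
  -- orthogonality of q to α₃, α₂, p (coordinate computations)
  have hq3 : (q * star α₃).re = 0 := by
    rw [hq]
    simp only [Quaternion.re_mul, Quaternion.imI_mul, Quaternion.imJ_mul,
      Quaternion.imK_mul, Quaternion.re_star, Quaternion.imI_star,
      Quaternion.imJ_star, Quaternion.imK_star] at *
    linear_combination (α₃.re^2 + α₃.imI^2 + α₃.imJ^2 + α₃.imK^2) * hp2
  have hq2 : (q * star α₂).re = 0 := by
    rw [hq]
    simp only [Quaternion.re_mul, Quaternion.imI_mul, Quaternion.imJ_mul,
      Quaternion.imK_mul, Quaternion.re_star, Quaternion.imI_star,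
      Quaternion.imJ_star, Quaternion.imK_star] at *
    linear_combination (α₂.re^2 + α₂.imI^2 + α₂.imJ^2 + α₂.imK^2) * hp3
  have hqp : (q * star p).re = 0 := by
    rw [hq]
    simp only [Quaternion.re_mul, Quaternion.imI_mul, Quaternion.imJ_mul,
      Quaternion.imK_mul, Quaternion.re_star, Quaternion.imI_star,
      Quaternion.imJ_star, Quaternion.imK_star] at *
    linear_combination (2*(p.re*α₂.re + p.imI*α₂.imI + p.imJ*α₂.imJ + p.imK*α₂.imK)) * hp3
      - (p.re^2 + p.imI^2 + p.imJ^2 + p.imK^2) * h23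
  -- the orthonormal family
  set v : Fin 4 → Quaternion ℝ := ![p, q, α₂, α₃] with hv
  have honv : Orthonormal ℝ v := by
    rw [orthonormal_iff_ite]
    intro i j
    fin_cases i <;> fin_cases j <;>
      simp [hv, Quaternion.inner_def, Quaternion.self_mul_star,
        Quaternion.normSq_eq_norm_mul_self, hp, hnq, h2, h3, hq3, hq2, hqp, hp2, hp3, h23,
        re_star_mul' p q ▸ hqp, re_star_mul' α₂ q ▸ hq2, re_star_mul' α₃ q ▸ hq3,
        re_star_mul' α₂ p ▸ hp2, re_star_mul' α₃ p ▸ hp3, re_star_mul' α₃ α₂ ▸ h23]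
  have hspan : ⊤ ≤ Submodule.span ℝ (Set.range v) := by
    refine ge_of_eq ?_
    refine honv.linearIndependent.span_eq_top_of_card_eq_finrank ?_
    simp [Quaternion.finrank_eq_four]
  let b : OrthonormalBasis (Fin 4) ℝ (Quaternion ℝ) := OrthonormalBasis.mk honv hspan
  have hb : ∀ i, b i = v i := fun i => by simp [b, OrthonormalBasis.coe_mk]
  have hrep : α₁ = ∑ i : Fin 4, ⟪b i, α₁⟫ • b i := by
    rw [b.sum_repr' α₁]
  rw [Fin.sum_univ_four, hb 0, hb 1, hb 2, hb 3] at hrep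
  have hv0 : v 0 = p := rfl
  have hv1 : v 1 = q := rfl
  have hv2 : v 2 = α₂ := rfl
  have hv3 : v 3 = α₃ := rfl
  rw [hv0, hv1, hv2, hv3] at hrep
  have e0 : ⟪p, α₁⟫ = 0 := by rw [Quaternion.inner_def]; exact hp1
  have e2 : ⟪α₂, α₁⟫ = 0 := by rw [Quaternion.inner_def, re_star_mul']; exact h12
  have e3 : ⟪α₃, α₁⟫ = 0 := by rw [Quaternion.inner_def, re_star_mul']; exact h13
  rw [e0, e2, e3, zero_smul, zero_smul, zero_smul, zero_add, add_zero, add_zero] at hrep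
  set c : ℝ := ⟪q, α₁⟫ with hc
  have hcabs : |c| = 1 := by
    have : ‖α₁‖ = ‖c • q‖ := by rw [← hrep]
    rw [norm_smul, hnq, h1, Real.norm_eq_abs, mul_one] at this
    exact this.symm
  rcases abs_eq (by norm_num : (0:ℝ) ≤ 1) |>.mp hcabs with h | h
  · left; rw [h, one_smul] at hrep; exact hrep.symm
  · right; rw [h, neg_one_smul] at hrep
    rw [hrep]; simp
end

section
/- Let p ∈ S³, let ζ ∈ ℍ with |ζ| = 1, let α, β ∈ ℍ be tangent to S³ at p, and let w₁, w₂ ∈ ℍ be arbitrary. Then ⟨ᾱ·ζ − p̄·w₁, β̄·ζ − p̄·w₂⟩ = ⟨α, β⟩ + ⟨w₁, w₂⟩ + ⟨α·p̄·ζ, w₂⟩ + ⟨β·p̄·ζ, w₁⟩. -/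
open Quaternion RealInnerProductSpace

/-!
Write `⟪x, y⟫ = Re(x ȳ)`. Expanding bilinearly, the two diagonal terms reduce to `⟪α, β⟫` and
`⟪w₁, w₂⟫` because multiplying both arguments by a unit quaternion preserves the inner product.
For the cross terms, moving `p̄` across the inner product as its adjoint `p` produces `p ᾱ`, and
tangency `Re(α p̄) = 0` says `p ᾱ = conj(α p̄) = -α p̄`.
-/

namespace Quaternion

theorem re_mul_comm {R : Type*} [CommRing R] (a b : ℍ[R]) : (a * b).re = (b * a).re := by
  simp only [re_mul]
  ring

theorem inner_mul_left_eq_inner_star_mul (u a b : ℍ) : ⟪u * a, b⟫ = ⟪a, star u * b⟫ := by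
  rw [inner_def, inner_def, star_mul, star_star, mul_assoc, re_mul_comm, mul_assoc]

theorem inner_mul_mul_left (u a b : ℍ) : ⟪u * a, u * b⟫ = ‖u‖ ^ 2 * ⟪a, b⟫ := by
  rw [inner_mul_left_eq_inner_star_mul, ← mul_assoc, star_mul_self, normSq_eq_norm_mul_self,
    ← sq, coe_mul_eq_smul, real_inner_smul_right]

theorem inner_mul_mul_right (u a b : ℍ) : ⟪a * u, b * u⟫ = ‖u‖ ^ 2 * ⟪a, b⟫ := by
  rw [inner_def, inner_def, star_mul, mul_assoc, ← mul_assoc u, self_mul_star,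
    normSq_eq_norm_mul_self, ← sq, coe_mul_eq_smul, mul_smul_comm, re_smul, smul_eq_mul]

theorem inner_star_star (a b : ℍ) : ⟪star a, star b⟫ = ⟪a, b⟫ := by
  rw [inner_def, inner_def, star_star, re_mul_comm, ← inner_def, ← inner_def, real_inner_comm]

theorem mul_star_eq_neg_of_inner_eq_zero {a b : ℍ} (h : ⟪a, b⟫ = 0) :
    b * star a = -(a * star b) := by
  rw [inner_def, ← star_eq_neg, star_mul, star_star] at h
  exact h

theorem inner_star_mul_star_mul_of_inner_eq_zero {a p : ℍ} (h : ⟪a, p⟫ = 0) (w z : ℍ) :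
    ⟪star p * w, star a * z⟫ = -⟪a * star p * z, w⟫ := by
  rw [inner_mul_left_eq_inner_star_mul, star_star, ← mul_assoc,
    mul_star_eq_neg_of_inner_eq_zero h, neg_mul, inner_neg_right, real_inner_comm]

end Quaternion

/-- For `p ∈ S³ ⊂ ℍ`, a unit quaternion `ζ`, quaternions `α, β` tangent to `S³`
at `p`, and arbitrary `w₁, w₂ ∈ ℍ`, one has
`⟨ᾱ·ζ − p̄·w₁, β̄·ζ − p̄·w₂⟩ = ⟨α, β⟩ + ⟨w₁, w₂⟩ + ⟨α·p̄·ζ, w₂⟩ + ⟨β·p̄·ζ, w₁⟩`,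
where `⟨x, y⟩ = Re(x·ȳ)`. -/
theorem pullback_metric_identity
    (p ζ α β w₁ w₂ : Quaternion ℝ)
    (hp : ‖p‖ = 1) (hζ : ‖ζ‖ = 1)
    (hα : (α * star p).re = 0) (hβ : (β * star p).re = 0) :
    ((star α * ζ - star p * w₁) * star (star β * ζ - star p * w₂)).re
      = (α * star β).re + (w₁ * star w₂).re
        + ((α * star p * ζ) * star w₂).re + ((β * star p * ζ) * star w₁).re := by
  simp only [← inner_def] at hα hβ ⊢
  rw [inner_sub_left, inner_sub_right, inner_sub_right, inner_mul_mul_right, inner_star_star,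
    inner_mul_mul_left, norm_star, real_inner_comm _ (star α * ζ),
    inner_star_mul_star_mul_of_inner_eq_zero hα, inner_star_mul_star_mul_of_inner_eq_zero hβ,
    hp, hζ]
  ring
end

section
/- Let u, v ∈ Im ℍ with |u| = |v| = 1/√2 and v ≠ −u, and set ξ = −(u + v)/|u + v| and η = √2·v·ξ. Then ξ ∈ Im ℍ, |ξ| = 1, |η| = 1, ⟨ξ, η⟩ = 0, and η = (1 − 2·v·u)/(√2·|u + v|). -/
/-!
The quaternion norm is multiplicative, so `|η| = √2·|v|·|ξ| = 1`. Orthogonality holds because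
`Re(ξ·(v·ξ)‾) = Re(ξ·ξ̄·v̄) = |ξ|²·Re v = 0`. For the formula, a pure imaginary `v` satisfies
`v² = -|v|² = -1/2`, so `-2·v·(u + v) = 1 - 2·v·u`.
-/

open Quaternion

namespace Quaternion

theorem two_mul_sq_eq_neg_one_of_norm {v : ℍ[ℝ]} (hv : v.re = 0) (hnv : ‖v‖ = 1 / √2) :
    2 * v ^ 2 = -1 := by
  have hnormSq : 2 * normSq v = 1 := by
    rw [normSq_eq_norm_mul_self, hnv, ← sq, div_pow, Real.sq_sqrt zero_le_two]
    norm_num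
  rw [sq_eq_neg_normSq.mpr hv]
  show ((2 : ℝ) : ℍ[ℝ]) * _ = _
  rw [mul_neg, ← coe_mul, hnormSq, coe_one]

theorem re_mul_star_mul_self (x v : ℍ[ℝ]) : (x * star (v * x)).re = normSq x * v.re := by
  rw [star_mul, ← mul_assoc, self_mul_star, coe_mul_eq_smul, re_smul, re_star, smul_eq_mul]

end Quaternion

theorem neg_two_mul_mul_add {R : Type*} [Ring R] {u v : R} (hv : 2 * v ^ 2 = -1) :
    -(2 * (v * (u + v))) = 1 - 2 * (v * u) := by
  rw [mul_add, mul_add, ← mul_assoc 2 v v, mul_assoc, ← sq, hv]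
  abel

theorem gluck_warner_plane_generators_general
    (u v : Quaternion ℝ) (hu : u.re = 0) (hv : v.re = 0)
    (hnv : ‖v‖ = 1 / Real.sqrt 2)
    (hne : v ≠ -u) :
    let ξ : Quaternion ℝ := -(‖u + v‖⁻¹ • (u + v))
    let η : Quaternion ℝ := Real.sqrt 2 • (v * ξ)
    ξ.re = 0 ∧ ‖ξ‖ = 1 ∧ ‖η‖ = 1 ∧ (ξ * star η).re = 0 ∧
      η = (Real.sqrt 2 * ‖u + v‖)⁻¹ • (1 - 2 * (v * u)) := by
  intro ξ η
  have hsum : u + v ≠ 0 := fun h => hne (eq_neg_of_add_eq_zero_right h)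
  have hs : (0 : ℝ) < √2 := by positivity
  have hξ : ‖ξ‖ = 1 := by
    simpa only [ξ, norm_neg, RCLike.ofReal_real_eq_id, id] using norm_smul_inv_norm (𝕜 := ℝ) hsum
  have hη : ‖η‖ = 1 := by
    rw [norm_smul, norm_mul, hnv, hξ, Real.norm_of_nonneg hs.le]
    field_simp
  refine ⟨by simp [ξ, hu, hv], hξ, hη, ?_, ?_⟩
  · rw [Quaternion.star_smul, mul_smul_comm, re_smul, re_mul_star_mul_self, hv, mul_zero,
      smul_zero]
  · have hc : (√2 * ‖u + v‖)⁻¹ * 2 = √2 * ‖u + v‖⁻¹ := by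
      field_simp
      rw [Real.sq_sqrt zero_le_two]
    calc η = (√2 * ‖u + v‖⁻¹) • -(v * (u + v)) := by
          simp only [η, ξ, mul_neg, mul_smul_comm, smul_smul, smul_neg]
      _ = (√2 * ‖u + v‖)⁻¹ • -(2 * (v * (u + v))) := by
          rw [← hc, mul_smul, two_smul, two_mul, neg_add]
      _ = _ := by rw [neg_two_mul_mul_add (two_mul_sq_eq_neg_one_of_norm hv hnv)]

/-- Let `u, v` be pure imaginary quaternions with `|u| = |v| = 1/√2` and `v ≠ −u`,
and set `ξ = −(u + v)/|u + v|` and `η = √2·v·ξ`. Then `ξ` is pure imaginary,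
`|ξ| = 1`, `|η| = 1`, `⟨ξ, η⟩ = 0`, and `η = (1 − 2·v·u)/(√2·|u + v|)`. -/
theorem gluck_warner_plane_generators
    (u v : Quaternion ℝ) (hu : u.re = 0) (hv : v.re = 0)
    (hnu : ‖u‖ = 1 / Real.sqrt 2) (hnv : ‖v‖ = 1 / Real.sqrt 2)
    (hne : v ≠ -u) :
    let ξ : Quaternion ℝ := -(‖u + v‖⁻¹ • (u + v))
    let η : Quaternion ℝ := Real.sqrt 2 • (v * ξ)
    ξ.re = 0 ∧ ‖ξ‖ = 1 ∧ ‖η‖ = 1 ∧ (ξ * star η).re = 0 ∧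
      η = (Real.sqrt 2 * ‖u + v‖)⁻¹ • (1 - 2 * (v * u)) :=
  gluck_warner_plane_generators_general u v hu hv hnv hne
end
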